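/- arXiv:1609.04179 — 3 statements merged into one kernel-verified Lean document; each statement's English description precedes it below -/
import Mathlib

section
/- Let 0 < λ₁ ≤ λ₂ ≤ … ≤ λₙ be positive real numbers, λ_A = (λ₁ + … + λₙ)/n their arithmetic mean and λ_G = (λ₁⋯λₙ)^{1/n} their geometric mean. Then Σ_{i=1}^{n} (λᵢ − λ_G)² ≤ 2 n λₙ (λ_A − λ_G). -/
/-!
For `0 < G ≤ M` the function `y ↦ y - G log y - (y - G)² / (2M)` has derivative
`(y - G)(M - y) / (yM)`, so on `(0, M]` it is smallest at `y = G`. This gives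
`(x - G)² ≤ 2M (x - G + G (log G - log x))` for `0 < x ≤ M`. Summing over `x = λᵢ`, with `G` the
geometric mean and `M = λₙ`, the logarithmic terms cancel because `∑ log λᵢ = n log G`.
-/

open Real Finset

section Alzer

variable {G M : ℝ}

lemma hasDerivAt_sub_mul_log_sub_sq_div (hM : M ≠ 0) {y : ℝ} (hy : y ≠ 0) :
    HasDerivAt (fun y => y - G * log y - (y - G) ^ 2 / (2 * M))
      ((y - G) * (M - y) / (y * M)) y := by
  refine (((hasDerivAt_id y).sub ((hasDerivAt_log hy).const_mul G)).sub
    ((((hasDerivAt_id y).sub_const G).pow 2).div_const (2 * M))).congr_deriv ?_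
  simp only [id]
  field_simp
  ring

lemma sq_sub_le_two_mul_mul_sub_add_mul_log_sub (hG : 0 < G) (hGM : G ≤ M) {x : ℝ} (hx : 0 < x)
    (hxM : x ≤ M) : (x - G) ^ 2 ≤ 2 * M * (x - G + G * (log G - log x)) := by
  have hM : 0 < M := hG.trans_le hGM
  set F : ℝ → ℝ := fun y => y - G * log y - (y - G) ^ 2 / (2 * M)
  have hF : ∀ y, 0 < y → HasDerivAt F ((y - G) * (M - y) / (y * M)) y := fun y hy =>
    hasDerivAt_sub_mul_log_sub_sq_div hM.ne' hy.ne'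
  have hFcont : ∀ a, 0 < a → ∀ b, ContinuousOn F (Set.Icc a b) := fun a ha b y hy =>
    (hF y (ha.trans_le hy.1)).continuousAt.continuousWithinAt
  have hFG_le_Fx : F G ≤ F x := by
    rcases le_total G x with hGx | hxG
    · refine monotoneOn_of_hasDerivWithinAt_nonneg (convex_Icc G M) (hFcont G hG M)
        (fun y hy => (hF y ?_).hasDerivWithinAt) (fun y hy => ?_) ⟨le_rfl, hGM⟩ ⟨hGx, hxM⟩ hGx
      all_goals rw [interior_Icc] at hy
      · exact hG.trans hy.1
      · have := hG.trans hy.1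
        exact div_nonneg (mul_nonneg (by linarith [hy.1]) (by linarith [hy.2])) (by positivity)
    · refine antitoneOn_of_hasDerivWithinAt_nonpos (convex_Icc x G) (hFcont x hx G)
        (fun y hy => (hF y ?_).hasDerivWithinAt) (fun y hy => ?_) ⟨le_rfl, hxG⟩ ⟨hxG, le_rfl⟩ hxG
      all_goals rw [interior_Icc] at hy
      · exact hx.trans hy.1
      · have := hx.trans hy.1
        exact div_nonpos_of_nonpos_of_nonneg
          (mul_nonpos_of_nonpos_of_nonneg (by linarith [hy.2]) (by linarith [hy.2])) (by positivity)
  have h2M : 0 < 2 * M := by positivity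
  simp only [F, sub_self, ne_eq, OfNat.ofNat_ne_zero, not_false_eq_true, zero_pow, zero_div,
    sub_zero] at hFG_le_Fx
  rw [← div_le_iff₀' h2M]
  linarith

lemma le_of_sum_log_eq {ι : Type*} [Fintype ι] [Nonempty ι] {l : ι → ℝ} (hpos : ∀ i, 0 < l i)
    (hlM : ∀ i, l i ≤ M) (hG : 0 < G) (hlog : ∑ i, log (l i) = Fintype.card ι * log G) :
    G ≤ M := by
  have hM : 0 < M := (hpos (Classical.arbitrary ι)).trans_le (hlM _)
  have hsum : ∑ i, log (l i) ≤ Fintype.card ι * log M :=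
    (sum_le_sum fun i _ => log_le_log (hpos i) (hlM i)).trans_eq (by simp)
  rw [← log_le_log_iff hG hM]
  exact le_of_mul_le_mul_left (hlog ▸ hsum) (by exact_mod_cast Fintype.card_pos)

theorem sum_sq_sub_le_two_mul_mul_sum_sub {ι : Type*} [Fintype ι] [Nonempty ι] {l : ι → ℝ}
    (hpos : ∀ i, 0 < l i) (hlM : ∀ i, l i ≤ M) (hG : 0 < G)
    (hlog : ∑ i, log (l i) = Fintype.card ι * log G) :
    ∑ i, (l i - G) ^ 2 ≤ 2 * M * (∑ i, l i - Fintype.card ι * G) := by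
  have hGM := le_of_sum_log_eq hpos hlM hG hlog
  calc ∑ i, (l i - G) ^ 2 ≤ ∑ i, 2 * M * (l i - G + G * (log G - log (l i))) :=
        sum_le_sum fun i _ => sq_sub_le_two_mul_mul_sub_add_mul_log_sub hG hGM (hpos i) (hlM i)
    _ = 2 * M * (∑ i, l i - Fintype.card ι * G) := by
        simp only [← mul_sum, sum_add_distrib, sum_sub_distrib, sum_const, card_univ,
          nsmul_eq_mul, hlog]
        ring

end Alzer

lemma sum_log_eq_mul_log_rpow_prod {n : ℕ} (hn : 0 < n) {l : Fin n → ℝ} (hpos : ∀ i, 0 < l i) :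
    ∑ i, log (l i) = n * log ((∏ i, l i) ^ ((1 : ℝ) / n)) := by
  rw [log_rpow (prod_pos fun i _ => hpos i), log_prod fun i _ => (hpos i).ne']
  field_simp

/-- **Alzer's quantitative arithmetic–geometric mean inequality.**
For positive reals `0 < λ₁ ≤ … ≤ λₙ`, with arithmetic mean `λ_A` and geometric
mean `λ_G`, one has `∑ᵢ (λᵢ − λ_G)² ≤ 2 n λₙ (λ_A − λ_G)`. -/
theorem alzer_quantitative_amgm (n : ℕ) (hn : 0 < n) (l : Fin n → ℝ)
    (hmono : Monotone l) (hpos : ∀ i, 0 < l i) :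
    ∑ i, (l i - (∏ i, l i) ^ ((1 : ℝ) / n)) ^ 2 ≤
      2 * n * l ⟨n - 1, Nat.sub_lt hn Nat.one_pos⟩ *
        ((∑ i, l i) / n - (∏ i, l i) ^ ((1 : ℝ) / n)) := by
  have : Nonempty (Fin n) := ⟨⟨0, hn⟩⟩
  have hle_last : ∀ i, l i ≤ l ⟨n - 1, Nat.sub_lt hn Nat.one_pos⟩ := fun i =>
    hmono (Fin.mk_le_mk.mpr (Nat.le_pred_of_lt i.isLt))
  have key := sum_sq_sub_le_two_mul_mul_sum_sub hpos hle_last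
    (rpow_pos_of_pos (prod_pos fun i _ => hpos i) _)
    (by rw [Fintype.card_fin]; exact sum_log_eq_mul_log_rpow_prod hn hpos)
  rw [Fintype.card_fin] at key
  have hn' : (n : ℝ) ≠ 0 := by positivity
  convert key using 1
  field_simp
end

section
/- Let 0 < λ₁ ≤ … ≤ λₙ be positive reals with geometric mean λ_G = (λ₁⋯λₙ)^{1/n} = 1, and set H = (Σ_{i=1}^n (λᵢ − 1)²)^{1/2} and λ_A = (λ₁ + … + λₙ)/n. Then λ_A − 1 ≥ H²/(2n λₙ) ≥ H²/(2n(1 + H)) ≥ (c/n) 𝓕(H) for some universal constant c > 0. -/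
/-!
For `0 < x ≤ M` with `1 ≤ M` one has `(x - 1)² / (2M) ≤ x - 1 - log x`: below `1` by the
logarithmic series, above `1` from `log x ≤ sinh (log x) = (x - x⁻¹)/2`. Since `∏ λᵢ = 1`, the
logarithms cancel when this is summed with `M = λₙ`, leaving `n (λ_A - 1) ≥ H² / (2λₙ)`.
Moreover `|λₙ - 1| ≤ H`, so `λₙ ≤ 1 + H`, and `t - log (1 + t) ≤ t² / (1 + t)` gives the last
inequality with `c = 1/2`.
-/

open Real Finset

namespace Real

theorem sq_sub_one_div_two_le_sub_one_sub_log {x : ℝ} (hx₀ : 0 < x) (hx₁ : x ≤ 1) :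
    (x - 1) ^ 2 / 2 ≤ x - 1 - log x := by
  have hy : |1 - x| < 1 := by rw [abs_lt]; constructor <;> linarith
  have hy₀ : 0 ≤ 1 - x := by linarith
  have h := sum_le_hasSum (range 2) (fun k _ => by positivity)
    (hasSum_pow_div_log_of_abs_lt_one hy)
  simp only [sum_range_succ, sum_range_zero, sub_sub_cancel] at h
  norm_num at h
  linarith

theorem sq_sub_one_div_two_mul_self_le_sub_one_sub_log {x : ℝ} (hx : 1 ≤ x) :
    (x - 1) ^ 2 / (2 * x) ≤ x - 1 - log x := by
  have hx₀ : 0 < x := by linarith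
  have hlog : log x ≤ (x - x⁻¹) / 2 := sinh_log hx₀ ▸ self_le_sinh_iff.2 (log_nonneg hx)
  have : (x - 1) ^ 2 / (2 * x) = x - 1 - (x - x⁻¹) / 2 := by field_simp; ring_nf
  linarith

theorem sq_sub_one_div_two_mul_le_sub_one_sub_log {x M : ℝ} (hx : 0 < x) (hxM : x ≤ M)
    (hM : 1 ≤ M) : (x - 1) ^ 2 / (2 * M) ≤ x - 1 - log x := by
  rcases le_total x 1 with hx₁ | hx₁
  · calc (x - 1) ^ 2 / (2 * M) ≤ (x - 1) ^ 2 / 2 := by gcongr; linarith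
      _ ≤ x - 1 - log x := sq_sub_one_div_two_le_sub_one_sub_log hx hx₁
  · calc (x - 1) ^ 2 / (2 * M) ≤ (x - 1) ^ 2 / (2 * x) := by gcongr
      _ ≤ x - 1 - log x := sq_sub_one_div_two_mul_self_le_sub_one_sub_log hx₁

theorem sub_log_one_add_le {t : ℝ} (ht : -1 < t) : t - log (1 + t) ≤ t ^ 2 / (1 + t) := by
  have ht₀ : 0 < 1 + t := by linarith
  have h := one_sub_inv_le_log_of_pos ht₀
  have : t ^ 2 / (1 + t) = t - (1 - (1 + t)⁻¹) := by field_simp; ring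
  linarith

end Real

section

variable {ι : Type*} [Fintype ι] {l : ι → ℝ} {M : ℝ}

theorem one_le_of_prod_eq_one_of_forall_le [Nonempty ι] (hpos : ∀ i, 0 ≤ l i)
    (hle : ∀ i, l i ≤ M) (hprod : ∏ i, l i = 1) : 1 ≤ M := by
  have h := prod_le_prod (s := univ) (fun i _ => hpos i) (fun i _ => hle i)
  rw [hprod, prod_const] at h
  obtain ⟨i⟩ := ‹Nonempty ι›
  exact (one_le_pow_iff_of_nonneg ((hpos i).trans (hle i)) univ_nonempty.card_ne_zero).1 h

theorem sum_sq_sub_one_div_le_sum_sub_card (hpos : ∀ i, 0 < l i) (hle : ∀ i, l i ≤ M)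
    (hM : 1 ≤ M) (hprod : ∏ i, l i = 1) :
    (∑ i, (l i - 1) ^ 2) / (2 * M) ≤ ∑ i, l i - Fintype.card ι := by
  have hlog : ∑ i, log (l i) = 0 := by
    rw [← log_prod fun i _ => (hpos i).ne', hprod, log_one]
  calc (∑ i, (l i - 1) ^ 2) / (2 * M) = ∑ i, (l i - 1) ^ 2 / (2 * M) := sum_div ..
    _ ≤ ∑ i, (l i - 1 - log (l i)) :=
      sum_le_sum fun i _ => sq_sub_one_div_two_mul_le_sub_one_sub_log (hpos i) (hle i) hM
    _ = ∑ i, l i - Fintype.card ι := by simp [sum_sub_distrib, hlog]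

end

/-- If `0 < λ₁ ≤ … ≤ λₙ` have geometric mean `λ_G = 1` and
`H = (∑ᵢ (λᵢ − 1)²)^{1/2}`, then
`λ_A − 1 ≥ H²/(2nλₙ) ≥ H²/(2n(1+H)) ≥ (c/n) 𝓕(H)` for a universal constant `c > 0`,
where `𝓕(t) = t − log(1+t)`. -/
theorem amgm_deficit_lower_bound :
    ∃ c : ℝ, 0 < c ∧
      ∀ (n : ℕ) (hn : 0 < n) (l : Fin n → ℝ),
        Monotone l → (∀ i, 0 < l i) → (∏ i, l i) ^ ((1 : ℝ) / n) = 1 →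
        ∀ H : ℝ, H = Real.sqrt (∑ i, (l i - 1) ^ 2) →
          (∑ i, l i) / n - 1 ≥ H ^ 2 / (2 * n * l ⟨n - 1, Nat.sub_lt hn Nat.one_pos⟩) ∧
          H ^ 2 / (2 * n * l ⟨n - 1, Nat.sub_lt hn Nat.one_pos⟩) ≥ H ^ 2 / (2 * n * (1 + H)) ∧
          H ^ 2 / (2 * n * (1 + H)) ≥ (c / n) * (H - Real.log (1 + H)) := by
  refine ⟨1 / 2, by norm_num, fun n hn l hmono hpos hG H hH => ?_⟩
  set last : Fin n := ⟨n - 1, Nat.sub_lt hn Nat.one_pos⟩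
  have : Nonempty (Fin n) := ⟨last⟩
  have hn₀ : (0 : ℝ) < n := by exact_mod_cast hn
  have hle : ∀ i, l i ≤ l last := fun i =>
    hmono (Fin.le_iff_val_le_val.2 (Nat.le_sub_one_of_lt i.isLt))
  have hprod : ∏ i, l i = 1 := by
    rw [← rpow_inv_natCast_pow (prod_nonneg fun i _ => (hpos i).le) hn.ne', ← one_div, hG,
      one_pow]
  have hM₁ : 1 ≤ l last := one_le_of_prod_eq_one_of_forall_le (fun i => (hpos i).le) hle hprod
  have hH₀ : 0 ≤ H := hH ▸ sqrt_nonneg _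
  have hH2 : H ^ 2 = ∑ i, (l i - 1) ^ 2 := by rw [hH, sq_sqrt (by positivity)]
  have hMH : l last ≤ 1 + H := by
    have := abs_le.1 (hH ▸ abs_le_sqrt (single_le_sum (fun i _ => sq_nonneg (l i - 1))
      (mem_univ last)))
    linarith
  refine ⟨?_, ?_, ?_⟩
  · have h := sum_sq_sub_one_div_le_sum_sub_card hpos hle hM₁ hprod
    rw [← hH2, Fintype.card_fin] at h
    calc H ^ 2 / (2 * n * l last) = H ^ 2 / (2 * l last) / n := by field_simp
      _ ≤ (∑ i, l i - n) / n := by gcongr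
      _ = (∑ i, l i) / n - 1 := by field_simp
  · exact div_le_div_of_nonneg_left (sq_nonneg H) (by positivity) (by gcongr)
  · calc 1 / 2 / n * (H - log (1 + H)) ≤ 1 / 2 / n * (H ^ 2 / (1 + H)) := by
          gcongr; exact sub_log_one_add_le (by linarith)
      _ = H ^ 2 / (2 * n * (1 + H)) := by field_simp
end

section
/- For α > 0, let E_α = [−α/2, α/2] × [−1/(2α), 1/(2α)] and K_α = [−α²/2, α²/2] × [−1/(2α²), 1/(2α²)] be rectangles of area 1 in ℝ². Then W₁(λ_{E_α}, λ_{K_α}) ≥ (1/4)(α²/4 − α/2). -/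
open MeasureTheory
open scoped ENNReal

/-- The normalized Lebesgue measure `λ_A` on a set `A`. -/
noncomputable def lambdaMeas (n : ℕ) (A : Set (EuclideanSpace ℝ (Fin n))) :
    Measure (EuclideanSpace ℝ (Fin n)) :=
  (volume A)⁻¹ • volume.restrict A

/-- The `1`-Kantorovich–Rubinstein (Wasserstein) distance
`W₁(μ,ν) = inf_π ∬ |x−y| dπ(x,y)`, the infimum running over couplings `π` of `μ, ν`. -/
noncomputable def W1 {n : ℕ} (μ ν : Measure (EuclideanSpace ℝ (Fin n))) : ℝ :=
  (⨅ (π : Measure (EuclideanSpace ℝ (Fin n) × EuclideanSpace ℝ (Fin n)))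
    (_ : π.map Prod.fst = μ ∧ π.map Prod.snd = ν), ∫⁻ p, edist p.1 p.2 ∂π).toReal

/-- The rectangle `E_α = [−α/2, α/2] × [−1/(2α), 1/(2α)] ⊂ ℝ²`. -/
def rectE (α : ℝ) : Set (EuclideanSpace ℝ (Fin 2)) :=
  {x | x 0 ∈ Set.Icc (-(α / 2)) (α / 2) ∧ x 1 ∈ Set.Icc (-(1 / (2 * α))) (1 / (2 * α))}

/-- The rectangle `K_α = [−α²/2, α²/2] × [−1/(2α²), 1/(2α²)] ⊂ ℝ²`. -/
def rectK (α : ℝ) : Set (EuclideanSpace ℝ (Fin 2)) :=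
  {x | x 0 ∈ Set.Icc (-(α ^ 2 / 2)) (α ^ 2 / 2) ∧
       x 1 ∈ Set.Icc (-(1 / (2 * α ^ 2))) (1 / (2 * α ^ 2))}

open Set Metric EMetric Bornology

/-
The mass `(α - 1)/(4α)` that `λ_{K_α}` puts on the strip `x₀ ≥ (α² + α)/4` of `K_α` lies at
distance at least `(α² - α)/4` from `E_α ⊆ {x₀ ≤ α/2}`, so every coupling pays at least
`(α - 1)²/16 ≥ (1/4)(α²/4 - α/2)`. For `α < 1` the bound is negative.
-/

lemma ae_fst_mem_of_map_fst {X Y : Type*} [MeasurableSpace X] [MeasurableSpace Y]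
    {π : Measure (X × Y)} {μ : Measure X} {A : Set X} (hπ : π.map Prod.fst = μ)
    (hA : ∀ᵐ x ∂μ, x ∈ A) : ∀ᵐ p ∂π, p.1 ∈ A :=
  ae_of_ae_map measurable_fst.aemeasurable (hπ ▸ hA)

lemma ae_snd_mem_of_map_snd {X Y : Type*} [MeasurableSpace X] [MeasurableSpace Y]
    {π : Measure (X × Y)} {ν : Measure Y} {B : Set Y} (hπ : π.map Prod.snd = ν)
    (hB : ∀ᵐ y ∂ν, y ∈ B) : ∀ᵐ p ∂π, p.2 ∈ B :=
  ae_of_ae_map measurable_snd.aemeasurable (hπ ▸ hB)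

section TransportCost

variable {X : Type*} [PseudoMetricSpace X] [MeasurableSpace X]

noncomputable def transportCost (μ ν : Measure X) : ℝ≥0∞ :=
  ⨅ (π : Measure (X × X)) (_ : π.map Prod.fst = μ ∧ π.map Prod.snd = ν),
    ∫⁻ p, edist p.1 p.2 ∂π

lemma W1_eq_toReal_transportCost {n : ℕ} (μ ν : Measure (EuclideanSpace ℝ (Fin n))) :
    W1 μ ν = (transportCost μ ν).toReal :=
  rfl

variable {μ ν : Measure X} {A B S : Set X}

lemma transportCost_le_lintegral {π : Measure (X × X)} (hπ₁ : π.map Prod.fst = μ)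
    (hπ₂ : π.map Prod.snd = ν) : transportCost μ ν ≤ ∫⁻ p, edist p.1 p.2 ∂π :=
  iInf₂_le π ⟨hπ₁, hπ₂⟩

lemma transportCost_ne_top [IsProbabilityMeasure μ] [IsProbabilityMeasure ν]
    (hA : IsBounded A) (hμA : ∀ᵐ x ∂μ, x ∈ A) (hB : IsBounded B) (hνB : ∀ᵐ y ∂ν, y ∈ B) :
    transportCost μ ν ≠ ∞ := by
  have hfst : (μ.prod ν).map Prod.fst = μ := by simp
  have hsnd : (μ.prod ν).map Prod.snd = ν := by simp
  have hbound : ∀ᵐ p ∂μ.prod ν, edist p.1 p.2 ≤ ediam (A ∪ B) := by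
    filter_upwards [ae_fst_mem_of_map_fst hfst hμA, ae_snd_mem_of_map_snd hsnd hνB]
      with p hp₁ hp₂
    exact edist_le_ediam_of_mem (Or.inl hp₁) (Or.inr hp₂)
  refine ne_top_of_le_ne_top ?_ ((transportCost_le_lintegral hfst hsnd).trans
    (lintegral_mono_ae hbound))
  simpa using (hA.union hB).ediam_ne_top

variable [OpensMeasurableSpace X]

/-- Kantorovich duality, in the easy direction, for the `1`-Lipschitz potential `infEDist · A`. -/
lemma lintegral_infEDist_le_transportCost (hμA : ∀ᵐ x ∂μ, x ∈ A) :
    ∫⁻ y, infEDist y A ∂ν ≤ transportCost μ ν := by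
  refine le_iInf₂ fun π ⟨hπ₁, hπ₂⟩ => ?_
  calc ∫⁻ y, infEDist y A ∂ν = ∫⁻ p, infEDist p.2 A ∂π := by
        rw [← hπ₂, lintegral_map continuous_infEDist.measurable measurable_snd]
    _ ≤ ∫⁻ p, edist p.1 p.2 ∂π := by
        refine lintegral_mono_ae ?_
        filter_upwards [ae_fst_mem_of_map_fst hπ₁ hμA] with p hp
        rw [edist_comm]
        exact infEDist_le_edist_of_mem hp

lemma mul_measure_le_transportCost {d : ℝ≥0∞} (hμA : ∀ᵐ x ∂μ, x ∈ A)
    (hS : ∀ y ∈ S, d ≤ infEDist y A) :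
    d * ν S ≤ transportCost μ ν :=
  calc d * ν S ≤ d * ν {y | d ≤ infEDist y A} := by gcongr; exact hS
    _ ≤ ∫⁻ y, infEDist y A ∂ν :=
        mul_meas_ge_le_lintegral₀ continuous_infEDist.measurable.aemeasurable d
    _ ≤ transportCost μ ν := lintegral_infEDist_le_transportCost hμA

end TransportCost

section LambdaMeas

variable {n : ℕ} {A S : Set (EuclideanSpace ℝ (Fin n))}

lemma isProbabilityMeasure_lambdaMeas (h₀ : volume A ≠ 0) (h : volume A ≠ ∞) :
    IsProbabilityMeasure (lambdaMeas n A) :=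
  ⟨by simp [lambdaMeas, ENNReal.inv_mul_cancel h₀ h]⟩

lemma ae_lambdaMeas_mem (hA : MeasurableSet A) : ∀ᵐ x ∂lambdaMeas n A, x ∈ A :=
  Measure.ae_smul_measure (ae_restrict_mem hA) _

lemma lambdaMeas_apply_of_subset (hS : S ⊆ A) : lambdaMeas n A S = volume S / volume A := by
  rw [lambdaMeas, Measure.smul_apply, Measure.restrict_eq_self _ hS, smul_eq_mul,
    ENNReal.div_eq_inv_mul]

end LambdaMeas

section PlaneBox

def planeBox (a b c d : ℝ) : Set (EuclideanSpace ℝ (Fin 2)) :=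
  {x | x 0 ∈ Icc a b ∧ x 1 ∈ Icc c d}

variable (a b c d : ℝ)

lemma planeBox_eq_preimage :
    planeBox a b c d = WithLp.ofLp ⁻¹' Icc ![a, c] ![b, d] := by
  ext x
  simp [planeBox, Pi.le_def, Fin.forall_fin_two, and_and_and_comm]

lemma measurableSet_planeBox : MeasurableSet (planeBox a b c d) := by
  rw [planeBox_eq_preimage]
  exact WithLp.measurable_ofLp 2 _ measurableSet_Icc

lemma volume_planeBox :
    volume (planeBox a b c d) = ENNReal.ofReal (b - a) * ENNReal.ofReal (d - c) := by
  rw [planeBox_eq_preimage, (PiLp.volume_preserving_ofLp _).measure_preimage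
    measurableSet_Icc.nullMeasurableSet, Real.volume_Icc_pi]
  simp [Fin.prod_univ_two]

lemma isBounded_planeBox : IsBounded (planeBox a b c d) := by
  rw [planeBox_eq_preimage]
  exact (PiLp.antilipschitzWith_ofLp 2 _).isBounded_preimage isCompact_Icc.isBounded

lemma ofReal_sub_le_infEDist_planeBox (y : EuclideanSpace ℝ (Fin 2)) :
    ENNReal.ofReal (y 0 - b) ≤ infEDist y (planeBox a b c d) := by
  refine le_infEDist.2 fun x hx => ?_
  rw [edist_dist]
  refine ENNReal.ofReal_le_ofReal ?_
  calc y 0 - b ≤ |y 0 - x 0| := by linarith [hx.1.2, le_abs_self (y 0 - x 0)]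
    _ ≤ dist y x := PiLp.dist_apply_le y x 0

end PlaneBox

section Rectangles

variable {α : ℝ}

lemma rectE_eq_planeBox :
    rectE α = planeBox (-(α / 2)) (α / 2) (-(1 / (2 * α))) (1 / (2 * α)) :=
  rfl

lemma rectK_eq_planeBox :
    rectK α = planeBox (-(α ^ 2 / 2)) (α ^ 2 / 2) (-(1 / (2 * α ^ 2))) (1 / (2 * α ^ 2)) :=
  rfl

lemma measurableSet_rectE : MeasurableSet (rectE α) :=
  measurableSet_planeBox _ _ _ _

lemma measurableSet_rectK : MeasurableSet (rectK α) :=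
  measurableSet_planeBox _ _ _ _

lemma volume_rectE (hα : 0 < α) : volume (rectE α) = 1 := by
  rw [rectE_eq_planeBox, volume_planeBox, ← ENNReal.ofReal_mul (by linarith),
    ← ENNReal.ofReal_one]
  congr 1
  field_simp
  ring

lemma volume_rectK (hα : 0 < α) : volume (rectK α) = 1 := by
  rw [rectK_eq_planeBox, volume_planeBox, ← ENNReal.ofReal_mul (by nlinarith),
    ← ENNReal.ofReal_one]
  congr 1
  field_simp
  ring

lemma transportCost_lambdaMeas_rectE_rectK_ne_top (hα : 0 < α) :
    transportCost (lambdaMeas 2 (rectE α)) (lambdaMeas 2 (rectK α)) ≠ ∞ := by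
  have := isProbabilityMeasure_lambdaMeas (A := rectE α) (by simp [volume_rectE hα])
    (by simp [volume_rectE hα])
  have := isProbabilityMeasure_lambdaMeas (A := rectK α) (by simp [volume_rectK hα])
    (by simp [volume_rectK hα])
  exact transportCost_ne_top (isBounded_planeBox _ _ _ _) (ae_lambdaMeas_mem measurableSet_rectE)
    (isBounded_planeBox _ _ _ _) (ae_lambdaMeas_mem measurableSet_rectK)

def rightStrip (α : ℝ) : Set (EuclideanSpace ℝ (Fin 2)) :=
  planeBox ((α ^ 2 + α) / 4) (α ^ 2 / 2) (-(1 / (2 * α ^ 2))) (1 / (2 * α ^ 2))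

lemma rightStrip_subset_rectK (hα : 1 ≤ α) : rightStrip α ⊆ rectK α :=
  fun _ hy => ⟨⟨by nlinarith [hy.1.1], hy.1.2⟩, hy.2⟩

lemma lambdaMeas_rectK_rightStrip (hα : 1 ≤ α) :
    lambdaMeas 2 (rectK α) (rightStrip α) = ENNReal.ofReal ((α - 1) / (4 * α)) := by
  rw [lambdaMeas_apply_of_subset (rightStrip_subset_rectK hα), volume_rectK (by linarith),
    div_one, rightStrip, volume_planeBox, ← ENNReal.ofReal_mul (by nlinarith)]
  congr 1
  field_simp
  ring

lemma ofReal_le_infEDist_rectE_of_mem_rightStrip {y : EuclideanSpace ℝ (Fin 2)}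
    (hy : y ∈ rightStrip α) : ENNReal.ofReal ((α ^ 2 - α) / 4) ≤ infEDist y (rectE α) :=
  (ENNReal.ofReal_le_ofReal (by linarith [hy.1.1])).trans
    (ofReal_sub_le_infEDist_planeBox _ _ _ _ y)

end Rectangles

/-- For the unit-area rectangles `E_α` and `K_α` in `ℝ²`,
`W₁(λ_{E_α}, λ_{K_α}) ≥ (1/4)(α²/4 − α/2)`. -/
theorem W1_rectangles_lower_bound (α : ℝ) (hα : 0 < α) :
    W1 (lambdaMeas 2 (rectE α)) (lambdaMeas 2 (rectK α)) ≥
      (1 / 4) * (α ^ 2 / 4 - α / 2) := by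
  rcases lt_or_ge α 1 with hα₁ | hα₁
  · exact le_trans (by nlinarith) ENNReal.toReal_nonneg
  have hcost : ENNReal.ofReal ((α ^ 2 - α) / 4) * lambdaMeas 2 (rectK α) (rightStrip α) ≤
      transportCost (lambdaMeas 2 (rectE α)) (lambdaMeas 2 (rectK α)) :=
    mul_measure_le_transportCost (ae_lambdaMeas_mem measurableSet_rectE) fun _ =>
      ofReal_le_infEDist_rectE_of_mem_rightStrip
  rw [lambdaMeas_rectK_rightStrip hα₁, ← ENNReal.ofReal_mul (by nlinarith)] at hcost
  rw [W1_eq_toReal_transportCost, ge_iff_le,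
    ← ENNReal.ofReal_le_iff_le_toReal (transportCost_lambdaMeas_rectE_rectK_ne_top hα)]
  refine le_trans (ENNReal.ofReal_le_ofReal ?_) hcost
  rw [show (α ^ 2 - α) / 4 * ((α - 1) / (4 * α)) = (α - 1) ^ 2 / 16 by field_simp; ring]
  nlinarith
end
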